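/- arXiv:1903.03520 — 2 statements merged into one kernel-verified Lean document; each statement's English description precedes it below -/
import Mathlib

section
/- Let x, y be strings over a metric space, let l be the maximum run length in x and y, and let c(x), c(y) be the strings obtained by collapsing each run to length one. Then dtw(x, y) ≤ l · dtw(c(x), c(y)). -/
/-- `xb` is an expansion of `x`: each letter of `x` is duplicated in place a positive
number of times. -/
def IsExpansion {α : Type*} (x xb : List α) : Prop :=
  ∃ ks : List ℕ, ks.length = x.length ∧ (∀ k ∈ ks, 0 < k) ∧
    xb = (List.zipWith (fun a k => List.replicate k a) x ks).flatten

/-- `(xb, yb)` is a correspondence between `x` and `y`: a pair of equal-length expansions. -/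
def IsCorrespondence {α : Type*} (x y xb yb : List α) : Prop :=
  IsExpansion x xb ∧ IsExpansion y yb ∧ xb.length = yb.length

/-- The cost of a correspondence: summed distances of aligned letters. -/
noncomputable def corrCost {α : Type*} (δ : α → α → ℝ) (xb yb : List α) : ℝ :=
  (List.zipWith δ xb yb).sum

/-- Dynamic time warping distance with respect to a distance function `δ`. -/
noncomputable def dtw {α : Type*} (δ : α → α → ℝ) (x y : List α) : ℝ :=
  sInf {c | ∃ xb yb, IsCorrespondence x y xb yb ∧ c = corrCost δ xb yb}

/-- Generalized Hamming distance on letters. -/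
noncomputable def hamDist {α : Type*} [DecidableEq α] (a b : α) : ℝ := if a = b then 0 else 1

/-- DTW over generalized Hamming space. -/
noncomputable def dtw0 {α : Type*} [DecidableEq α] (x y : List α) : ℝ := dtw hamDist x y

/-- The maximal run length appearing in a string: max of lengths of maximal blocks of
equal consecutive letters. -/
def maxRunLen {α : Type*} [DecidableEq α] (x : List α) : ℕ :=
  ((x.splitBy (fun a b => decide (a = b))).map List.length).foldr max 0

/-! Cut `x` into its runs, `x = a₁^{k₁} ⋯ aₘ^{kₘ}` with `c(x) = a₁ ⋯ aₘ` and every `kᵢ ≤ l`, and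
likewise `y`. Repeating every letter of any correspondence `(u, v)` of `(c(x), c(y))`
`l` times multiplies its cost by `l`, and the result is a correspondence of `(x, y)`: a letter
`aᵢ` occurring `m ≥ 1` times in `u` now occurs `l * m ≥ kᵢ` times, enough to expand its run. -/

def expand {α : Type*} (c : List α) (ks : List ℕ) : List α :=
  (List.zipWith (fun a k => List.replicate k a) c ks).flatten

def stretch {α : Type*} (l : ℕ) (u : List α) : List α :=
  u.flatMap (List.replicate l)

section Expansion

variable {α : Type*}

@[simp]
theorem isExpansion_nil_left {z : List α} : IsExpansion [] z ↔ z = [] := by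
  constructor
  · rintro ⟨ks, -, -, rfl⟩
    simp
  · rintro rfl
    exact ⟨[], rfl, by simp, rfl⟩

theorem isExpansion_cons_left {a : α} {x z : List α} :
    IsExpansion (a :: x) z ↔ ∃ k z', 0 < k ∧ IsExpansion x z' ∧ z = List.replicate k a ++ z' := by
  constructor
  · rintro ⟨_ | ⟨k, ks⟩, hlen, hpos, rfl⟩
    · simp at hlen
    · exact ⟨k, _, hpos k (by simp),
        ⟨ks, by simpa using hlen, fun k' hk' => hpos k' (by simp [hk']), rfl⟩, by simp⟩
  · rintro ⟨k, z', hk, ⟨ks, hlen, hpos, rfl⟩, rfl⟩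
    refine ⟨k :: ks, by simp [hlen], ?_, by simp⟩
    simpa [hk] using hpos

theorem isExpansion_stretch {l : ℕ} (hl : 0 < l) (u : List α) : IsExpansion u (stretch l u) := by
  induction u with
  | nil => simp [stretch]
  | cons a u ih => exact isExpansion_cons_left.mpr ⟨l, _, hl, ih, by simp [stretch]⟩

theorem IsExpansion.replicate_append {a : α} {x z : List α} {k N : ℕ} (h : IsExpansion x z)
    (hk : 0 < k) (hkN : k ≤ N) :
    IsExpansion (List.replicate k a ++ x) (List.replicate N a ++ z) := by
  induction k generalizing N with
  | zero => omega
  | succ k ih =>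
    rcases Nat.eq_zero_or_pos k with rfl | hk
    · exact isExpansion_cons_left.mpr ⟨N, z, by omega, h, rfl⟩
    -- the first copy of `a` is expanded once, the remaining `k` copies take the other `N - 1`
    refine isExpansion_cons_left.mpr ⟨1, _, one_pos, ih hk (Nat.le_sub_one_of_lt hkN), ?_⟩
    rw [← List.append_assoc, ← List.replicate_add, Nat.add_sub_cancel' (by omega)]

theorem isExpansion_expand_stretch {l : ℕ} {c u : List α} {ks : List ℕ}
    (hlen : ks.length = c.length) (hks : ∀ k ∈ ks, 0 < k ∧ k ≤ l) (hu : IsExpansion c u) :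
    IsExpansion (expand c ks) (stretch l u) := by
  induction c generalizing ks u with
  | nil => simp_all [expand, stretch]
  | cons a c ih =>
    obtain _ | ⟨k, ks⟩ := ks
    · simp at hlen
    obtain ⟨m, u', hm, hu', rfl⟩ := isExpansion_cons_left.mp hu
    have hk := hks k (by simp)
    have hstretch : stretch l (List.replicate m a ++ u') =
        List.replicate (l * m) a ++ stretch l u' := by
      simp [stretch, List.flatMap_replicate, List.flatten_replicate_replicate, mul_comm]
    rw [hstretch]
    exact (ih (by simpa using hlen) (fun k' hk' => hks k' (by simp [hk'])) hu').replicate_append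
      hk.1 (hk.2.trans (Nat.le_mul_of_pos_right l hm))

theorem exists_isCorrespondence {x y : List α} (hx : x ≠ []) (hy : y ≠ []) :
    ∃ xb yb, IsCorrespondence x y xb yb :=
  ⟨stretch y.length x, stretch x.length y,
    isExpansion_stretch (List.length_pos_iff.mpr hy) x,
    isExpansion_stretch (List.length_pos_iff.mpr hx) y, by simp [stretch, mul_comm]⟩

end Expansion

section Cost

variable {α : Type*} (δ : α → α → ℝ)

theorem corrCost_nonneg (hδ : ∀ a b, 0 ≤ δ a b) (xb yb : List α) : 0 ≤ corrCost δ xb yb :=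
  List.sum_nonneg fun _ h => by
    obtain ⟨i, hi, rfl⟩ := List.getElem_of_mem h
    simpa using hδ _ _

theorem corrCost_stretch (l : ℕ) {ub vb : List α} (h : ub.length = vb.length) :
    corrCost δ (stretch l ub) (stretch l vb) = l * corrCost δ ub vb := by
  induction ub generalizing vb with
  | nil => simp [corrCost, stretch]
  | cons a ub ih =>
    obtain _ | ⟨b, vb⟩ := vb
    · simp at h
    have ih' := ih (by simpa using h)
    simp only [corrCost, stretch] at ih' ⊢
    rw [List.flatMap_cons, List.flatMap_cons, List.zipWith_append (by simp), List.sum_append,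
      List.zipWith_replicate', ih', List.zipWith_cons_cons, List.sum_cons, List.sum_replicate,
      nsmul_eq_mul]
    ring

theorem dtw_le_corrCost (hδ : ∀ a b, 0 ≤ δ a b) {x y xb yb : List α}
    (h : IsCorrespondence x y xb yb) : dtw δ x y ≤ corrCost δ xb yb :=
  csInf_le ⟨0, by rintro _ ⟨xb, yb, -, rfl⟩; exact corrCost_nonneg δ hδ xb yb⟩ ⟨xb, yb, h, rfl⟩

theorem dtw_of_forall_corrCost_eq_zero {x y : List α}
    (h : ∀ xb yb, IsCorrespondence x y xb yb → corrCost δ xb yb = 0) : dtw δ x y = 0 := by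
  have hsub : {c | ∃ xb yb, IsCorrespondence x y xb yb ∧ c = corrCost δ xb yb} ⊆ {0} := by
    rintro _ ⟨xb, yb, hc, rfl⟩
    exact h xb yb hc
  rcases Set.subset_singleton_iff_eq.mp hsub with hS | hS <;>
    simp only [dtw, hS, Real.sInf_empty, csInf_singleton]

@[simp]
theorem dtw_nil_left (y : List α) : dtw δ [] y = 0 :=
  dtw_of_forall_corrCost_eq_zero δ fun xb yb h => by
    simp [isExpansion_nil_left.mp h.1, corrCost]

@[simp]
theorem dtw_nil_right (x : List α) : dtw δ x [] = 0 :=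
  dtw_of_forall_corrCost_eq_zero δ fun xb yb h => by
    simp [isExpansion_nil_left.mp h.2.1, corrCost]

theorem dtw_expand_le_mul (hδ : ∀ a b, 0 ≤ δ a b) {l : ℕ} {c d : List α} {ks ms : List ℕ}
    (hc : c ≠ []) (hd : d ≠ [])
    (hks : ks.length = c.length) (hks' : ∀ k ∈ ks, 0 < k ∧ k ≤ l)
    (hms : ms.length = d.length) (hms' : ∀ m ∈ ms, 0 < m ∧ m ≤ l) :
    dtw δ (expand c ks) (expand d ms) ≤ l * dtw δ c d := by
  have hl : (0 : ℝ) < l := by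
    have hks_ne : ks ≠ [] := by rw [← List.length_pos_iff, hks]; exact List.length_pos_iff.mpr hc
    obtain ⟨k, hk⟩ := List.exists_mem_of_ne_nil ks hks_ne
    exact_mod_cast (hks' k hk).1.trans_le (hks' k hk).2
  obtain ⟨u, v, huv⟩ := exists_isCorrespondence hc hd
  refine (div_le_iff₀' hl).mp <| le_csInf ⟨_, u, v, huv, rfl⟩ ?_
  rintro _ ⟨u, v, ⟨hu, hv, huv⟩, rfl⟩
  rw [div_le_iff₀' hl, ← corrCost_stretch δ l huv]
  exact dtw_le_corrCost δ hδ ⟨isExpansion_expand_stretch hks hks' hu,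
    isExpansion_expand_stretch hms hms' hv, by simp [stretch, huv]⟩

end Cost

section Runs

variable {α : Type*} [DecidableEq α] {a : α} {k : ℕ} {t : List α}

theorem maxRunLen_replicate_append (hk : 0 < k) (ht : ∀ b ∈ t.head?, b ≠ a) :
    maxRunLen (List.replicate k a ++ t) = max k (maxRunLen t) := by
  have hrun : (List.replicate k a).splitBy (fun p q => decide (p = q)) = [List.replicate k a] :=
    List.splitBy_of_isChain (by simp; omega) (List.isChain_replicate_of_rel k (by simp))
  rw [maxRunLen, List.splitBy_append, hrun]
  · simp [maxRunLen]
  · intro p hp q hq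
    rw [List.getLast?_replicate, if_neg hk.ne', Option.mem_some_iff] at hp
    subst hp
    simpa using (ht q hq).symm

theorem destutter_replicate_append (hk : 0 < k) (ht : ∀ b ∈ t.head?, b ≠ a) :
    (List.replicate k a ++ t).destutter (· ≠ ·) = a :: t.destutter (· ≠ ·) := by
  have hskip (j : ℕ) : (List.replicate j a ++ t).destutter' (· ≠ ·) a = t.destutter' (· ≠ ·) a := by
    induction j with
    | zero => rfl
    | succ j ih => rw [List.replicate_succ, List.cons_append,
        List.destutter'_cons_neg _ (by simp), ih]
  obtain ⟨k, rfl⟩ := Nat.exists_eq_add_one_of_ne_zero hk.ne'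
  rw [List.replicate_succ, List.cons_append, List.destutter_cons', hskip]
  cases t with
  | nil => rfl
  | cons b t => rw [List.destutter'_cons_pos _ (ht b rfl).symm, List.destutter_cons']

theorem exists_runs_replicate_append (hk : 0 < k) :
    ∃ ks : List ℕ, ks.length = ((List.replicate k a ++ t).destutter (· ≠ ·)).length ∧
      (∀ k' ∈ ks, 0 < k' ∧ k' ≤ maxRunLen (List.replicate k a ++ t)) ∧
      List.replicate k a ++ t = expand ((List.replicate k a ++ t).destutter (· ≠ ·)) ks := by
  induction t generalizing k a with
  | nil =>
    have hc := destutter_replicate_append (t := []) (a := a) hk (by simp)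
    have hl := maxRunLen_replicate_append (t := []) (a := a) hk (by simp)
    rw [hc, hl]
    refine ⟨[k], rfl, by simp [hk, maxRunLen], by simp [expand]⟩
  | cons b t ih =>
    by_cases hba : b = a
    · subst hba
      simpa [List.replicate_succ'] using ih (a := b) (Nat.succ_pos k)
    have ht : ∀ c ∈ (b :: t).head?, c ≠ a := by simpa using hba
    obtain ⟨ks, hlen, hbound, heq⟩ := ih (a := b) (k := 1) one_pos
    rw [List.replicate_one, List.singleton_append] at hlen hbound heq
    rw [destutter_replicate_append hk ht, maxRunLen_replicate_append hk ht]
    refine ⟨k :: ks, by simpa using hlen, ?_, ?_⟩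
    · simpa [hk] using fun k' hk' => ⟨(hbound k' hk').1, Or.inr (hbound k' hk').2⟩
    · rw [expand, List.zipWith_cons_cons, List.flatten_cons, ← expand, ← heq]

theorem exists_runs (x : List α) :
    ∃ ks : List ℕ, ks.length = (x.destutter (· ≠ ·)).length ∧
      (∀ k ∈ ks, 0 < k ∧ k ≤ maxRunLen x) ∧ x = expand (x.destutter (· ≠ ·)) ks := by
  cases x with
  | nil => exact ⟨[], by simp, by simp, by simp [expand]⟩
  | cons a t => simpa using exists_runs_replicate_append (a := a) (t := t) one_pos

end Runs

/-- If l is the maximum run length in x and y, then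
dtw(x, y) ≤ l · dtw(c(x), c(y)), where c collapses runs. -/
theorem dtw_le_maxRun_mul_dtw_destutter {α : Type*} [MetricSpace α] [DecidableEq α]
    (x y : List α) :
    dtw dist x y ≤
      (max (maxRunLen x) (maxRunLen y) : ℝ) *
        dtw dist (x.destutter (· ≠ ·)) (y.destutter (· ≠ ·)) := by
  rcases eq_or_ne x [] with rfl | hx
  · simp
  rcases eq_or_ne y [] with rfl | hy
  · simp
  obtain ⟨ks, hks, hks', hx_eq⟩ := exists_runs x
  obtain ⟨ms, hms, hms', hy_eq⟩ := exists_runs y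
  rw [← Nat.cast_max]
  conv_lhs => rw [hx_eq, hy_eq]
  exact dtw_expand_le_mul dist (fun _ _ => dist_nonneg)
    (mt (List.destutter_eq_nil _).mp hx) (mt (List.destutter_eq_nil _).mp hy)
    hks (fun k hk => ⟨(hks' k hk).1, (hks' k hk).2.trans (le_max_left _ _)⟩)
    hms (fun m hm => ⟨(hms' m hm).1, (hms' m hm).2.trans (le_max_right _ _)⟩)
end

section
/- Let T be a well-separated tree metric and s_r the r-simplification map on letters. Then for any two letters l₁, l₂: d(s_r(l₁), s_r(l₂)) ≤ d(l₁, l₂), and d(l₁, l₂) ≤ d(s_r(l₁), s_r(l₂)) + r/4. -/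
/-- A well-separated tree metric: a rooted tree on Σ with positive edge weights
(`w v` is the weight of the edge from `v` to its parent) that are non-increasing
along root-to-leaf paths. -/
structure WSTree (σ : Type*) where
  root : σ
  par : σ → σ
  w : σ → ℝ
  depth : σ → ℕ
  depth_root : depth root = 0
  root_of_depth : ∀ v, depth v = 0 → v = root
  par_root : par root = root
  depth_par : ∀ v, v ≠ root → depth (par v) + 1 = depth v
  w_pos : ∀ v, v ≠ root → 0 < w v
  w_mono : ∀ v, v ≠ root → par v ≠ root → w v ≤ w (par v)

/-- The k-th iterated ancestor of v. -/
def WSTree.anc {σ : Type*} (T : WSTree σ) (v : σ) : ℕ → σ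
  | 0 => v
  | k + 1 => T.par (T.anc v k)

/-- The maximum weight among the first k edges on the path from v towards the root. -/
noncomputable def WSTree.upMax {σ : Type*} (T : WSTree σ) (v : σ) : ℕ → ℝ
  | 0 => 0
  | k + 1 => max (T.upMax v k) (T.w (T.anc v k))

/-- The well-separated tree metric distance: the maximum edge weight on the tree path
between u and v (minimized over common ancestors through which the path may pass). -/
noncomputable def WSTree.tdist {σ : Type*} (T : WSTree σ) (u v : σ) : ℝ :=
  sInf {c | ∃ j k, T.anc u j = T.anc v k ∧ c = max (T.upMax u j) (T.upMax v k)}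

/-- The number of steps up from v to its highest ancestor reachable via edges of
weight at most r/4. -/
noncomputable def WSTree.srIdx {σ : Type*} (T : WSTree σ) (r : ℝ) (v : σ) : ℕ :=
  sSup {k | k ≤ T.depth v ∧ ∀ i < k, T.w (T.anc v i) ≤ r / 4}

/-- The r-simplification on letters: the highest ancestor of v reachable from v via
edges of weight at most r/4. -/
noncomputable def WSTree.sr {σ : Type*} (T : WSTree σ) (r : ℝ) (v : σ) : σ :=
  T.anc v (T.srIdx r v)

/-!
Below its simplification, the root path of a letter uses only edges of weight at most `r/4`,
and the first edge above it is heavier. Because weights do not decrease towards the root, two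
root paths that meet strictly below `sr u` also meet strictly below `sr v`, and then
`sr u = sr v`; otherwise they meet above both simplifications, and the paths from the
simplifications to the meeting point are no heavier than the original ones. Conversely,
prepending the two light segments to a path between the simplifications raises its maximum edge
weight by at most `r/4`.
-/

namespace WSTree

variable {σ : Type*} (T : WSTree σ)

lemma anc_succ (v : σ) (k : ℕ) : T.anc v (k + 1) = T.par (T.anc v k) := rfl

lemma anc_add (v : σ) (m t : ℕ) : T.anc v (m + t) = T.anc (T.anc v m) t := by
  induction t with
  | zero => rfl
  | succ t ih => rw [← add_assoc, anc_succ, ih, anc_succ]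

lemma anc_root (n : ℕ) : T.anc T.root n = T.root := by
  induction n with
  | zero => rfl
  | succ n ih => rw [anc_succ, ih, T.par_root]

lemma depth_anc {v : σ} {k : ℕ} (hk : k ≤ T.depth v) :
    T.depth (T.anc v k) = T.depth v - k := by
  induction k with
  | zero => rfl
  | succ k ih =>
    have ih := ih (by omega)
    have hne : T.anc v k ≠ T.root := by
      intro h
      rw [h, T.depth_root] at ih
      omega
    have := T.depth_par _ hne
    rw [anc_succ]
    omega

lemma anc_of_depth_le {v : σ} {t : ℕ} (ht : T.depth v ≤ t) : T.anc v t = T.root := by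
  have hroot : T.anc v (T.depth v) = T.root :=
    T.root_of_depth _ (by rw [T.depth_anc le_rfl, Nat.sub_self])
  obtain ⟨s, rfl⟩ := Nat.exists_eq_add_of_le ht
  rw [anc_add, hroot, anc_root]

lemma anc_ne_root {v : σ} {k : ℕ} (hk : k < T.depth v) : T.anc v k ≠ T.root := by
  intro h
  have := T.depth_anc hk.le
  rw [h, T.depth_root] at this
  omega

lemma w_anc_le_w_anc {v : σ} {i k : ℕ} (hik : i ≤ k) (hk : k < T.depth v) :
    T.w (T.anc v i) ≤ T.w (T.anc v k) := by
  induction k, hik using Nat.le_induction with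
  | base => exact le_rfl
  | succ k _ ih =>
    exact (ih (by omega)).trans (T.w_mono _ (T.anc_ne_root (by omega)) (T.anc_ne_root hk))

lemma upMax_succ (v : σ) (k : ℕ) :
    T.upMax v (k + 1) = max (T.upMax v k) (T.w (T.anc v k)) := rfl

lemma upMax_nonneg (v : σ) (k : ℕ) : 0 ≤ T.upMax v k := by
  induction k with
  | zero => exact le_rfl
  | succ k ih => exact ih.trans (le_max_left _ _)

lemma upMax_add (v : σ) (m t : ℕ) :
    T.upMax v (m + t) = max (T.upMax v m) (T.upMax (T.anc v m) t) := by
  induction t with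
  | zero => exact (max_eq_left (T.upMax_nonneg v m)).symm
  | succ t ih => rw [← add_assoc, upMax_succ, ih, upMax_succ, max_assoc, ← anc_add]

lemma upMax_le {v : σ} {B : ℝ} (hB : 0 ≤ B) {k : ℕ}
    (hw : ∀ i < k, T.w (T.anc v i) ≤ B) : T.upMax v k ≤ B := by
  induction k with
  | zero => exact hB
  | succ k ih => exact max_le (ih fun i hi => hw i (by omega)) (hw k (by omega))

lemma srIdx_mem (r : ℝ) (v : σ) :
    T.srIdx r v ≤ T.depth v ∧ ∀ i < T.srIdx r v, T.w (T.anc v i) ≤ r / 4 :=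
  Nat.sSup_mem (s := {k | k ≤ T.depth v ∧ ∀ i < k, T.w (T.anc v i) ≤ r / 4}) ⟨0, by simp⟩
    ⟨T.depth v, fun _ hk => hk.1⟩

lemma le_srIdx {r : ℝ} {v : σ} {k : ℕ} (hk : k ≤ T.depth v)
    (hw : ∀ i < k, T.w (T.anc v i) ≤ r / 4) : k ≤ T.srIdx r v :=
  le_csSup ⟨T.depth v, fun _ hk => hk.1⟩ ⟨hk, hw⟩

/-- Light edges stay light further down, since weights do not decrease towards the root. -/
lemma lt_srIdx_of_anc_eq {r : ℝ} {u v : σ} {j k : ℕ} (hjk : T.anc u j = T.anc v k)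
    (hj : j < T.srIdx r u) : k < T.srIdx r v := by
  obtain ⟨hu_depth, hu_light⟩ := T.srIdx_mem r u
  have hk : k < T.depth v := by
    by_contra! h
    exact T.anc_ne_root (hj.trans_le hu_depth) (hjk ▸ T.anc_of_depth_le h)
  have hw : T.w (T.anc v k) ≤ r / 4 := hjk ▸ hu_light j hj
  exact T.le_srIdx hk fun i hi => (T.w_anc_le_w_anc (by omega) hk).trans hw

lemma srIdx_anc {r : ℝ} {v : σ} {j : ℕ} (hj : j ≤ T.srIdx r v) :
    T.srIdx r (T.anc v j) = T.srIdx r v - j := by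
  obtain ⟨hv_depth, hv_light⟩ := T.srIdx_mem r v
  have hdepth : T.depth (T.anc v j) = T.depth v - j := T.depth_anc (hj.trans hv_depth)
  obtain ⟨ha_depth, ha_light⟩ := T.srIdx_mem r (T.anc v j)
  apply le_antisymm
  · have : j + T.srIdx r (T.anc v j) ≤ T.srIdx r v := by
      refine T.le_srIdx (by omega) fun i hi => ?_
      rcases lt_or_ge i j with h | h
      · exact hv_light i (h.trans_le hj)
      · obtain ⟨i', rfl⟩ := Nat.exists_eq_add_of_le h
        rw [anc_add]
        exact ha_light i' (by omega)
    omega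
  · refine T.le_srIdx (by omega) fun i hi => ?_
    rw [← anc_add]
    exact hv_light (j + i) (by omega)

lemma sr_anc {r : ℝ} {v : σ} {j : ℕ} (hj : j ≤ T.srIdx r v) :
    T.sr r (T.anc v j) = T.sr r v := by
  rw [sr, srIdx_anc T hj, ← anc_add, Nat.add_sub_cancel' hj, sr]

lemma sr_eq_of_anc_eq {r : ℝ} {u v : σ} {j k : ℕ} (hjk : T.anc u j = T.anc v k)
    (hj : j < T.srIdx r u) : T.sr r u = T.sr r v := by
  rw [← T.sr_anc hj.le, hjk, T.sr_anc (T.lt_srIdx_of_anc_eq hjk hj).le]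

lemma tdist_le {u v : σ} {j k : ℕ} (h : T.anc u j = T.anc v k) :
    T.tdist u v ≤ max (T.upMax u j) (T.upMax v k) :=
  csInf_le ⟨0, by rintro _ ⟨j, k, _, rfl⟩; exact le_max_of_le_left (T.upMax_nonneg u j)⟩
    ⟨j, k, h, rfl⟩

lemma le_tdist {u v : σ} {c : ℝ}
    (h : ∀ j k, T.anc u j = T.anc v k → c ≤ max (T.upMax u j) (T.upMax v k)) :
    c ≤ T.tdist u v := by
  refine le_csInf ⟨_, T.depth u, T.depth v, ?_, rfl⟩ ?_
  · rw [T.anc_of_depth_le le_rfl, T.anc_of_depth_le le_rfl]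
  · rintro _ ⟨j, k, hjk, rfl⟩
    exact h j k hjk

lemma tdist_nonneg (u v : σ) : 0 ≤ T.tdist u v :=
  T.le_tdist fun j _ _ => le_max_of_le_left (T.upMax_nonneg u j)

lemma tdist_self (u : σ) : T.tdist u u = 0 :=
  le_antisymm ((T.tdist_le (j := 0) (k := 0) rfl).trans_eq (max_self _)) (T.tdist_nonneg u u)

lemma tdist_le_tdist_anc_add {u v : σ} {m n : ℕ} {A : ℝ}
    (hu : T.upMax u m ≤ A) (hv : T.upMax v n ≤ A) :
    T.tdist u v ≤ T.tdist (T.anc u m) (T.anc v n) + A := by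
  rw [← sub_le_iff_le_add]
  refine T.le_tdist fun j k hjk => ?_
  set a := T.upMax (T.anc u m) j
  set b := T.upMax (T.anc v n) k
  have hpath : T.tdist u v ≤ max (max (T.upMax u m) a) (max (T.upMax v n) b) := by
    rw [← upMax_add, ← upMax_add]
    exact T.tdist_le (by rw [anc_add, anc_add, hjk])
  have : 0 ≤ a := T.upMax_nonneg _ _
  have : 0 ≤ A := (T.upMax_nonneg u m).trans hu
  have := le_max_left a b
  have := le_max_right a b
  have : max (max (T.upMax u m) a) (max (T.upMax v n) b) ≤ max a b + A := by
    simp only [max_le_iff]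
    refine ⟨⟨?_, ?_⟩, ?_, ?_⟩ <;> linarith
  linarith

lemma tdist_sr_le (r : ℝ) (u v : σ) : T.tdist (T.sr r u) (T.sr r v) ≤ T.tdist u v := by
  refine T.le_tdist fun j k hjk => ?_
  by_cases hj : j < T.srIdx r u
  · rw [T.sr_eq_of_anc_eq hjk hj, tdist_self]
    exact le_max_of_le_left (T.upMax_nonneg u j)
  have hk : ¬ k < T.srIdx r v := fun hk => hj (T.lt_srIdx_of_anc_eq hjk.symm hk)
  obtain ⟨j', rfl⟩ := Nat.exists_eq_add_of_le (not_lt.mp hj)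
  obtain ⟨k', rfl⟩ := Nat.exists_eq_add_of_le (not_lt.mp hk)
  rw [anc_add, anc_add] at hjk
  rw [upMax_add, upMax_add]
  exact (T.tdist_le hjk).trans (max_le_max (le_max_right _ _) (le_max_right _ _))

lemma tdist_le_tdist_sr_add {r : ℝ} (hr : 0 ≤ r) (u v : σ) :
    T.tdist u v ≤ T.tdist (T.sr r u) (T.sr r v) + r / 4 := by
  have hr4 : 0 ≤ r / 4 := by positivity
  exact T.tdist_le_tdist_anc_add (T.upMax_le hr4 (T.srIdx_mem r u).2)
    (T.upMax_le hr4 (T.srIdx_mem r v).2)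

end WSTree

/-- r-simplification does not increase distances, and decreases them by at most r/4. -/
theorem tdist_sr_bounds {σ : Type*} (T : WSTree σ) (r : ℝ) (hr : 1 ≤ r) (l1 l2 : σ) :
    T.tdist (T.sr r l1) (T.sr r l2) ≤ T.tdist l1 l2 ∧
      T.tdist l1 l2 ≤ T.tdist (T.sr r l1) (T.sr r l2) + r / 4 :=
  ⟨T.tdist_sr_le r l1 l2, T.tdist_le_tdist_sr_add (by linarith) l1 l2⟩
end
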